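/- On the region Ω = {x : r(x) > 0}, the null vector field k is smooth and its gradient satisfies k_{b,a} = ∂k_b/∂x^a = (1/r)(η_{ab} + v_a k_b + k_a v_b − (1 + r a·k) k_a k_b) for all a, b, where k_b = η_{bc}k^c and v_a = η_{ab}v^b. -/

import Mathlib

/-!
The retarded time is the implicit function of `F (x, τ) = (x - z τ)·(x - z τ) = 0`, whose
`τ`-derivative `-2 v·(x - z τ) = 2 r` does not vanish on `Ω`. On `Ω` the retarded point lies
strictly in the past of `x` (a null vector with vanishing time component is zero, which would
force `r = 0`), an open condition, so uniqueness of the retarded time identifies `u` near `x`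
with the smooth implicit function; hence `u`, `r` and `k` are smooth.

For the gradient, differentiating `F (x, u x) = 0` in a direction `w` gives `∂_w u = -k·w`.
Then `∂_w (x - z u) = w + (k·w) v`, `∂_w r = -v·w + (1 + r a·k)(k·w)` (using `v·v = -1`), and the
quotient rule for `k = (x - z u) / r` gives
`∂_w k = (w + (k·w) v + (v·w) k - (1 + r a·k)(k·w) k) / r`; lowering the index and taking
`w = e_a` is the formula.
-/

open scoped BigOperators

noncomputable section

/-- The Minkowski metric η = diag(−1,1,1,1) on ℝ⁴. -/
def eta (i j : Fin 4) : ℝ := if i = j then (if i = 0 then -1 else 1) else 0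

/-- Minkowski inner product a·b = η_{ij} a^i b^j. -/
def mdot (a b : Fin 4 → ℝ) : ℝ := ∑ i, ∑ j, eta i j * a i * b j

/-- Lowering an index with η : k_i = η_{ij} k^j. -/
def lo (a : Fin 4 → ℝ) (i : Fin 4) : ℝ := ∑ j, eta i j * a j

open Topology

section Minkowski

lemma mdot_eq_coord (a b : Fin 4 → ℝ) :
    mdot a b = -(a 0 * b 0) + a 1 * b 1 + a 2 * b 2 + a 3 * b 3 := by
  simp [mdot, eta, Fin.sum_univ_four]

lemma lo_eq_coord (a : Fin 4 → ℝ) (i : Fin 4) : lo a i = (if i = 0 then -1 else 1) * a i := by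
  fin_cases i <;> simp [lo, eta]

lemma mdot_comm (a b : Fin 4 → ℝ) : mdot a b = mdot b a := by
  simp only [mdot_eq_coord]; ring

lemma isBilinearMap_mdot : IsBilinearMap ℝ mdot where
  add_left _ _ _ := by simp only [mdot_eq_coord, Pi.add_apply]; ring
  smul_left _ _ _ := by simp only [mdot_eq_coord, Pi.smul_apply, smul_eq_mul]; ring
  add_right _ _ _ := by simp only [mdot_eq_coord, Pi.add_apply]; ring
  smul_right _ _ _ := by simp only [mdot_eq_coord, Pi.smul_apply, smul_eq_mul]; ring

def mdotL : (Fin 4 → ℝ) →L[ℝ] (Fin 4 → ℝ) →L[ℝ] ℝ :=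
  isBilinearMap_mdot.toContinuousBilinearMap

@[simp] lemma mdotL_apply (a b : Fin 4 → ℝ) : mdotL a b = mdot a b := rfl

lemma mdot_sub_right (a b c : Fin 4 → ℝ) : mdot a (b - c) = mdot a b - mdot a c :=
  (mdotL a).map_sub b c

lemma mdot_smul_left (t : ℝ) (a b : Fin 4 → ℝ) : mdot (t • a) b = t * mdot a b :=
  isBilinearMap_mdot.smul_left t a b

lemma mdot_smul_right (t : ℝ) (a b : Fin 4 → ℝ) : mdot a (t • b) = t * mdot a b :=
  isBilinearMap_mdot.smul_right t a b

lemma mdot_single (a : Fin 4 → ℝ) (i : Fin 4) : mdot a (Pi.single i 1) = lo a i := by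
  fin_cases i <;> simp [mdot_eq_coord, lo_eq_coord]

lemma lo_single (i j : Fin 4) : lo (Pi.single i 1) j = eta i j := by
  fin_cases i <;> fin_cases j <;> simp [lo_eq_coord, eta]

lemma lo_add (a b : Fin 4 → ℝ) (i : Fin 4) : lo (a + b) i = lo a i + lo b i := by
  simp only [lo_eq_coord, Pi.add_apply]; ring

lemma lo_sub (a b : Fin 4 → ℝ) (i : Fin 4) : lo (a - b) i = lo a i - lo b i := by
  simp only [lo_eq_coord, Pi.sub_apply]; ring

lemma lo_smul (t : ℝ) (a : Fin 4 → ℝ) (i : Fin 4) : lo (t • a) i = t * lo a i := by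
  simp only [lo_eq_coord, Pi.smul_apply, smul_eq_mul]; ring

lemma eq_zero_of_mdot_self_eq_zero_of_time_eq_zero {a : Fin 4 → ℝ} (hnull : mdot a a = 0)
    (h0 : a 0 = 0) : a = 0 := by
  rw [mdot_eq_coord, h0] at hnull
  have h1 : a 1 = 0 := by nlinarith [sq_nonneg (a 1), sq_nonneg (a 2), sq_nonneg (a 3)]
  have h2 : a 2 = 0 := by nlinarith [sq_nonneg (a 1), sq_nonneg (a 2), sq_nonneg (a 3)]
  have h3 : a 3 = 0 := by nlinarith [sq_nonneg (a 1), sq_nonneg (a 2), sq_nonneg (a 3)]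
  ext i; fin_cases i <;> assumption

lemma HasDerivAt.mdot {f g : ℝ → Fin 4 → ℝ} {f' g' : Fin 4 → ℝ} {t : ℝ}
    (hf : HasDerivAt f f' t) (hg : HasDerivAt g g' t) :
    HasDerivAt (fun s => mdot (f s) (g s)) (mdot (f t) g' + mdot f' (g t)) t :=
  mdotL.hasDerivAt_of_bilinear (fun _ => hf) (fun _ => hg)

lemma ContDiffAt.mdot {E : Type*} [NormedAddCommGroup E] [NormedSpace ℝ E]
    {n : WithTop ℕ∞} {f g : E → Fin 4 → ℝ} {x : E}
    (hf : ContDiffAt ℝ n f x) (hg : ContDiffAt ℝ n g x) :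
    ContDiffAt ℝ n (fun y => mdot (f y) (g y)) x :=
  mdotL.isBoundedBilinearMap.contDiff.contDiffAt.comp x (hf.prodMk hg)

lemma hasDerivAt_mdot_sub_self {z : ℝ → Fin 4 → ℝ} {z' : Fin 4 → ℝ} {τ : ℝ} (x : Fin 4 → ℝ)
    (hz : HasDerivAt z z' τ) :
    HasDerivAt (fun s => mdot (x - z s) (x - z s)) (-2 * mdot z' (x - z τ)) τ := by
  refine ((hz.const_sub x).mdot (hz.const_sub x)).congr_deriv ?_
  simp only [mdot_eq_coord, Pi.neg_apply, Pi.sub_apply]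
  ring

end Minkowski

lemma eq_deriv_of_apply_eq_deriv_apply {ι : Type*} [Fintype ι] {z v : ℝ → ι → ℝ}
    (hz : Differentiable ℝ z) (hv : ∀ τ i, v τ i = deriv (fun t => z t i) τ) : v = deriv z := by
  funext τ i
  rw [hv, deriv_pi fun j => (differentiable_pi.mp hz j) τ]

lemma ContinuousLinearMap.isInvertible_of_apply_one_ne_zero {𝕜 : Type*} [NormedField 𝕜]
    {f : 𝕜 →L[𝕜] 𝕜} (hf : f 1 ≠ 0) : f.IsInvertible :=
  .of_inverse (g := (f 1)⁻¹ • .id 𝕜 𝕜) (by ext; simp [hf]) (by ext; simp [hf])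

section LineDeriv

variable {E F : Type*} [NormedAddCommGroup E] [NormedSpace ℝ E]
  [NormedAddCommGroup F] [NormedSpace ℝ F] {x w : E}

lemma HasDerivAt.scomp_hasLineDerivAt {g : ℝ → F} {g' : F} {f : E → ℝ} {f' : ℝ}
    (hg : HasDerivAt g g' (f x)) (hf : HasLineDerivAt ℝ f f' x w) :
    HasLineDerivAt ℝ (fun y => g (f y)) (f' • g') x w := by
  have hg' : HasDerivAt g g' (f (x + (0 : ℝ) • w)) := by simpa using hg
  exact hg'.scomp 0 hf

lemma HasLineDerivAt.mdot {f g : E → Fin 4 → ℝ} {f' g' : Fin 4 → ℝ}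
    (hf : HasLineDerivAt ℝ f f' x w) (hg : HasLineDerivAt ℝ g g' x w) :
    HasLineDerivAt ℝ (fun y => mdot (f y) (g y)) (mdot (f x) g' + mdot f' (g x)) x w := by
  simpa [HasLineDerivAt] using HasDerivAt.mdot hf hg

lemma hasLineDerivAt_sub_comp {z : ℝ → E} {z' : E} {u : E → ℝ} {u' : ℝ}
    (hz : HasDerivAt z z' (u x)) (hu : HasLineDerivAt ℝ u u' x w) :
    HasLineDerivAt ℝ (fun y => y - z (u y)) (w - u' • z') x w := by
  have hline : HasDerivAt (fun t : ℝ => x + t • w) w 0 := by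
    simpa using ((hasDerivAt_id (0 : ℝ)).smul_const w).const_add x
  exact hline.sub (hz.scomp_hasLineDerivAt hu)

lemma fderiv_lo_apply {f : E → Fin 4 → ℝ} {f' : Fin 4 → ℝ} (hf : DifferentiableAt ℝ f x)
    (hf' : HasLineDerivAt ℝ f f' x w) (b : Fin 4) :
    fderiv ℝ (fun y => lo (f y) b) x w = lo f' b := by
  have hlo : (fun y => lo (f y) b) = mdotL.flip (Pi.single b 1) ∘ f := by
    funext y; simp [mdot_single]
  have h := (mdotL.flip (Pi.single b 1)).hasFDerivAt.comp x hf.hasFDerivAt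
  rw [← hlo] at h
  rw [h.fderiv, ContinuousLinearMap.comp_apply, ← hf.lineDeriv_eq_fderiv, hf'.lineDeriv]
  simp [mdot_single]

end LineDeriv

section RetardedTime

variable {z : ℝ → Fin 4 → ℝ} {u : (Fin 4 → ℝ) → ℝ}

lemma contDiffAt_retardedTime {n : WithTop ℕ∞} (hn : n ≠ 0) (hz : ContDiff ℝ n z)
    (huniq : ∀ x τ, mdot (x - z τ) (x - z τ) = 0 → z τ 0 ≤ x 0 → τ = u x) {x₀ : Fin 4 → ℝ}
    (hnull : mdot (x₀ - z (u x₀)) (x₀ - z (u x₀)) = 0) (hpast : z (u x₀) 0 ≤ x₀ 0)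
    (hx₀ : mdot (deriv z (u x₀)) (x₀ - z (u x₀)) ≠ 0) :
    ContDiffAt ℝ n u x₀ := by
  set F : (Fin 4 → ℝ) × ℝ → ℝ := fun p => mdot (p.1 - z p.2) (p.1 - z p.2)
  have hF : ContDiffAt ℝ n F (x₀, u x₀) := by
    have hχ := (contDiff_fst.sub (hz.comp contDiff_snd)).contDiffAt (x := (x₀, u x₀))
    exact hχ.mdot hχ
  have hFτ : HasLineDerivAt ℝ F (-2 * mdot (deriv z (u x₀)) (x₀ - z (u x₀)))
      (x₀, u x₀) (0, 1) := by
    have hz' : HasDerivAt z (deriv z (u x₀)) (u x₀ + 0) := by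
      simpa using ((hz.differentiable hn) (u x₀)).hasDerivAt
    simpa [HasLineDerivAt, F] using (hasDerivAt_mdot_sub_self x₀ hz').comp_const_add (u x₀) 0
  have hinv : (fderiv ℝ F (x₀, u x₀) ∘L .inr ℝ (Fin 4 → ℝ) ℝ).IsInvertible := by
    refine ContinuousLinearMap.isInvertible_of_apply_one_ne_zero ?_
    rw [ContinuousLinearMap.comp_apply, ContinuousLinearMap.inr_apply,
      ← (hF.differentiableAt hn).lineDeriv_eq_fderiv, hFτ.lineDeriv]
    simpa using hx₀
  set ψ := hF.implicitFunction hn hinv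
  have hψnull : ∀ᶠ x in 𝓝 x₀, F (x, ψ x) = 0 := by
    simpa [F, hnull] using hF.eventually_apply_implicitFunction hn hinv
  have hψpast : ∀ᶠ x in 𝓝 x₀, z (ψ x) 0 < x 0 := by
    have hpos : z (u x₀) 0 < x₀ 0 := by
      refine hpast.lt_of_ne fun h => hx₀ ?_
      rw [eq_zero_of_mdot_self_eq_zero_of_time_eq_zero hnull (by simp [h])]
      simp [mdot_eq_coord]
    have hψ₀ : ψ x₀ = u x₀ := hF.implicitFunction_apply_self hn hinv
    have hzψ : ContinuousAt (fun x => z (ψ x) 0) x₀ := (continuous_apply 0).continuousAt.comp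
      (hz.continuous.continuousAt.comp (hF.contDiffAt_implicitFunction hn hinv).continuousAt)
    exact hzψ.eventually_lt (continuous_apply 0).continuousAt (by simpa [hψ₀] using hpos)
  have hψu : ψ =ᶠ[𝓝 x₀] u := by
    filter_upwards [hψnull, hψpast] with x hx hx'
    exact huniq x (ψ x) hx hx'.le
  exact (hF.contDiffAt_implicitFunction hn hinv).congr_of_eventuallyEq hψu.symm

lemma fderiv_retardedTime_apply_mul (hu : ∀ x, mdot (x - z (u x)) (x - z (u x)) = 0)
    {x₀ : Fin 4 → ℝ} (hux : DifferentiableAt ℝ u x₀) (hz : DifferentiableAt ℝ z (u x₀))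
    (w : Fin 4 → ℝ) :
    fderiv ℝ u x₀ w * mdot (x₀ - z (u x₀)) (deriv z (u x₀)) = mdot (x₀ - z (u x₀)) w := by
  have hχ := hasLineDerivAt_sub_comp hz.hasDerivAt (hux.hasFDerivAt.hasLineDerivAt w)
  have hconst : HasLineDerivAt ℝ (fun y => mdot (y - z (u y)) (y - z (u y))) 0 x₀ w := by
    rw [funext hu]
    exact hasDerivAt_const _ _
  have hzero := (hχ.mdot hχ).unique hconst
  simp only [mdot_comm (w - _), mdot_sub_right, mdot_smul_right] at hzero
  linarith

variable {v : ℝ → Fin 4 → ℝ} {r : (Fin 4 → ℝ) → ℝ} {k : (Fin 4 → ℝ) → Fin 4 → ℝ}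

lemma sub_eq_smul_nullVector (hk : ∀ x, k x = (r x)⁻¹ • (x - z (u x))) {x : Fin 4 → ℝ}
    (hx : r x ≠ 0) : x - z (u x) = r x • k x := by
  rw [hk, smul_smul, mul_inv_cancel₀ hx, one_smul]

lemma mdot_velocity_nullVector (hr : ∀ x, r x = -mdot (v (u x)) (x - z (u x)))
    (hk : ∀ x, k x = (r x)⁻¹ • (x - z (u x))) {x : Fin 4 → ℝ} (hx : r x ≠ 0) :
    mdot (v (u x)) (k x) = -1 := by
  have h := hr x
  rw [sub_eq_smul_nullVector hk hx, mdot_smul_right] at h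
  field_simp at h
  linarith

lemma hasLineDerivAt_retardedTime (hu : ∀ x, mdot (x - z (u x)) (x - z (u x)) = 0)
    (hr : ∀ x, r x = -mdot (v (u x)) (x - z (u x)))
    (hk : ∀ x, k x = (r x)⁻¹ • (x - z (u x))) {x : Fin 4 → ℝ} (hx : r x ≠ 0)
    (hux : DifferentiableAt ℝ u x) (hz : HasDerivAt z (v (u x)) (u x)) (w : Fin 4 → ℝ) :
    HasLineDerivAt ℝ u (-mdot (k x) w) x w := by
  have h := fderiv_retardedTime_apply_mul hu hux hz.differentiableAt w
  rw [hz.deriv, sub_eq_smul_nullVector hk hx, mdot_smul_left, mdot_smul_left, mdot_comm,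
    mdot_velocity_nullVector hr hk hx] at h
  field_simp at h
  rw [← h, neg_neg]
  exact hux.hasFDerivAt.hasLineDerivAt w

lemma contDiffAt_nullVector {n : WithTop ℕ∞} (hz : ContDiff ℝ n z) (hv : ContDiff ℝ n v)
    (hr : ∀ x, r x = -mdot (v (u x)) (x - z (u x)))
    (hk : ∀ x, k x = (r x)⁻¹ • (x - z (u x))) {x : Fin 4 → ℝ} (hx : r x ≠ 0)
    (hux : ContDiffAt ℝ n u x) : ContDiffAt ℝ n k x := by
  have hχ := contDiffAt_id.sub (hz.contDiffAt.comp x hux)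
  have hrx : ContDiffAt ℝ n r x := by
    rw [funext hr]
    exact ((hv.contDiffAt.comp x hux).mdot hχ).neg
  rw [funext hk]
  exact (hrx.inv hx).smul hχ

lemma hasLineDerivAt_nullVector {acc : ℝ → Fin 4 → ℝ} {x₀ w : Fin 4 → ℝ}
    (hz : HasDerivAt z (v (u x₀)) (u x₀)) (hv : HasDerivAt v (acc (u x₀)) (u x₀))
    (hunit : mdot (v (u x₀)) (v (u x₀)) = -1)
    (hr : ∀ x, r x = -mdot (v (u x)) (x - z (u x)))
    (hk : ∀ x, k x = (r x)⁻¹ • (x - z (u x))) (hr₀ : r x₀ ≠ 0)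
    (hu : HasLineDerivAt ℝ u (-mdot (k x₀) w) x₀ w) :
    HasLineDerivAt ℝ k ((r x₀)⁻¹ • (w + mdot (k x₀) w • v (u x₀) + mdot (v (u x₀)) w • k x₀
      - ((1 + r x₀ * mdot (acc (u x₀)) (k x₀)) * mdot (k x₀) w) • k x₀)) x₀ w := by
  have hχ := hasLineDerivAt_sub_comp hz hu
  have hvχ := (hv.scomp_hasLineDerivAt hu).mdot hχ
  unfold HasLineDerivAt at hχ hvχ ⊢
  have hρ := hvχ.neg
  simp only [Pi.neg_def, ← hr] at hρ
  have hk' := (hρ.inv (by simpa using hr₀)).smul hχ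
  simp only [zero_smul, add_zero, Pi.inv_apply] at hk'
  simp only [hk]
  convert hk' using 1
  · rfl
  simp only [sub_eq_smul_nullVector hk hr₀, mdot_sub_right, mdot_smul_right, mdot_smul_left,
    hunit]
  ext i
  simp only [Pi.add_apply, Pi.sub_apply, Pi.smul_apply, smul_eq_mul]
  field_simp
  ring

end RetardedTime

theorem null_vector_smooth_gradient_general
    (z : ℝ → Fin 4 → ℝ) (hz : ContDiff ℝ (⊤ : ℕ∞) z)
    (v : ℝ → Fin 4 → ℝ) (hv : ∀ τ i, v τ i = deriv (fun t => z t i) τ)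
    (acc : ℝ → Fin 4 → ℝ) (hacc : ∀ τ i, acc τ i = deriv (fun t => v t i) τ)
    (hunit : ∀ τ, mdot (v τ) (v τ) = -1)
    (u : (Fin 4 → ℝ) → ℝ)
    (hu : ∀ x, mdot (x - z (u x)) (x - z (u x)) = 0 ∧ z (u x) 0 ≤ x 0)
    (huniq : ∀ x τ, mdot (x - z τ) (x - z τ) = 0 → z τ 0 ≤ x 0 → τ = u x)
    (r : (Fin 4 → ℝ) → ℝ)
    (hr : ∀ x, r x = -mdot (v (u x)) (x - z (u x)))
    (k : (Fin 4 → ℝ) → Fin 4 → ℝ)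
    (hk : ∀ x, k x = (r x)⁻¹ • (x - z (u x))) :
    ContDiffOn ℝ (⊤ : ℕ∞) k {x | 0 < r x} ∧
    ∀ x ∈ {x : Fin 4 → ℝ | 0 < r x}, ∀ a b : Fin 4,
      fderiv ℝ (fun y => lo (k y) b) x (Pi.single a 1) =
        (1 / r x) * (eta a b + lo (v (u x)) a * lo (k x) b
          + lo (k x) a * lo (v (u x)) b
          - (1 + r x * mdot (acc (u x)) (k x)) * lo (k x) a * lo (k x) b) := by
  have hzd : Differentiable ℝ z := hz.differentiable (by simp)
  have hvz : v = deriv z := eq_deriv_of_apply_eq_deriv_apply hzd hv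
  have hvs : ContDiff ℝ (⊤ : ℕ∞) v := hvz ▸ (contDiff_infty_iff_deriv.mp hz).2
  have hvd : Differentiable ℝ v := hvs.differentiable (by simp)
  have hav : acc = deriv v := eq_deriv_of_apply_eq_deriv_apply hvd hacc
  have hus : ∀ x, 0 < r x → ContDiffAt ℝ (⊤ : ℕ∞) u x := fun x hx =>
    contDiffAt_retardedTime (by simp) hz huniq (hu x).1 (hu x).2 (by rw [← hvz]; linarith [hr x])
  have hks : ∀ x, 0 < r x → ContDiffAt ℝ (⊤ : ℕ∞) k x := fun x hx =>
    contDiffAt_nullVector hz hvs hr hk hx.ne' (hus x hx)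
  refine ⟨fun x hx => (hks x hx).contDiffWithinAt, fun x (hx : 0 < r x) a b => ?_⟩
  have hzx : HasDerivAt z (v (u x)) (u x) := hvz ▸ (hzd _).hasDerivAt
  have hdu := hasLineDerivAt_retardedTime (fun y => (hu y).1) hr hk hx.ne'
    ((hus x hx).differentiableAt (by simp)) hzx (Pi.single a 1)
  have hkline := hasLineDerivAt_nullVector hzx (hav ▸ (hvd _).hasDerivAt) (hunit _) hr hk
    hx.ne' hdu
  rw [fderiv_lo_apply ((hks x hx).differentiableAt (by simp)) hkline b]
  simp only [lo_add, lo_sub, lo_smul, lo_single, mdot_single]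
  ring

/-- The null vector field `k` is smooth on Ω = {x | r x > 0} and its gradient
is `k_{b,a} = (1/r)(η_{ab} + v_a k_b + k_a v_b − (1 + r a·k) k_a k_b)`. -/
theorem null_vector_smooth_gradient
    (z : ℝ → Fin 4 → ℝ) (hz : ContDiff ℝ (⊤ : ℕ∞) z)
    (v : ℝ → Fin 4 → ℝ) (hv : ∀ τ i, v τ i = deriv (fun t => z t i) τ)
    (acc : ℝ → Fin 4 → ℝ) (hacc : ∀ τ i, acc τ i = deriv (fun t => v t i) τ)
    (hunit : ∀ τ, mdot (v τ) (v τ) = -1)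
    (hfut : ∀ τ, 0 < v τ 0)
    (u : (Fin 4 → ℝ) → ℝ)
    (hu : ∀ x, mdot (x - z (u x)) (x - z (u x)) = 0 ∧ z (u x) 0 ≤ x 0)
    (huniq : ∀ x τ, mdot (x - z τ) (x - z τ) = 0 → z τ 0 ≤ x 0 → τ = u x)
    (r : (Fin 4 → ℝ) → ℝ)
    (hr : ∀ x, r x = -mdot (v (u x)) (x - z (u x)))
    (k : (Fin 4 → ℝ) → Fin 4 → ℝ)
    (hk : ∀ x, k x = (r x)⁻¹ • (x - z (u x))) :
    ContDiffOn ℝ (⊤ : ℕ∞) k {x | 0 < r x} ∧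
    ∀ x ∈ {x : Fin 4 → ℝ | 0 < r x}, ∀ a b : Fin 4,
      fderiv ℝ (fun y => lo (k y) b) x (Pi.single a 1) =
        (1 / r x) * (eta a b + lo (v (u x)) a * lo (k x) b
          + lo (k x) a * lo (v (u x)) b
          - (1 + r x * mdot (acc (u x)) (k x)) * lo (k x) a * lo (k x) b) :=
  null_vector_smooth_gradient_general z hz v hv acc hacc hunit u hu huniq r hr k hk
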